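/- arXiv:1312.1844 — 2 statements merged into one kernel-verified Lean document; each statement's English description precedes it below -/
import Mathlib

section
/- Let k be a positive integer and suppose β = 4. Define P_k(0,4,0) ∈ ℚ as the determinant of the k×k matrix whose (i,j) entry, for 1 ≤ i,j ≤ k, is c̃_{k+2r−1+j−i}. Then for every odd prime p with p > k+2r−2, the image of P_k(0,4,0) under the unique ring homomorphism ℚ → 𝔽_p into the field with p elements is nonzero. -/
/-!
For `β = 4` the recurrence gives `c̃ (2t+1) = 0` and `c̃ (2t) = ∏_{j<t} (2j+1-2r) / (2^t t!)`,
i.e. `c̃ (2t) = (-1)^t (r - 1/2 choose t)`. Modulo an odd prime `p` we have `r - 1/2 ≡ σ`, where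
`σ = r + (p-1)/2`, so each entry reduces to `(-1)^t (σ choose t)`; the denominators are prime to
`p`, and reduction mod `p` is a ring hom on `p`-integral rationals, so it commutes with `det`.

Since the odd coefficients vanish, sorting rows and columns by parity splits the Toeplitz matrix
into two Toeplitz blocks of signed binomial coefficients `(s choose a + j - i)`. A unitriangular
row operation (Vandermonde's convolution) turns these into `(s + n - 1 - i choose a + j - i)`, and
after factoring factorials out of rows and columns what is left is the matrix of descending
factorials `(a + j)^{(i)}`, which has the Vandermonde determinant of `0, …, n - 1`. So the block
determinants are quotients of products of factorials of numbers `< p`, hence nonzero mod `p`.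
-/

open Finset Matrix
open scoped Nat

-- `ℕ`-subtraction: the entries below the diagonal are right only when `n ≤ a + 1`.
def toeplitz {R : Type*} (f : ℕ → R) (n a : ℕ) : Matrix (Fin n) (Fin n) R :=
  of fun i j => f (a + j - i)

theorem toeplitz_congr {R : Type*} {f g : ℕ → R} {n a : ℕ} (h : ∀ t < a + n, f t = g t) :
    toeplitz f n a = toeplitz g n a := by
  ext i j
  exact h _ (by omega)

variable {R : Type*} [CommRing R]

theorem choose_add_eq_sum_range (w s K : ℕ) (hwK : w ≤ K) :
    ((w + s).choose K : R) = ∑ u ∈ range (w + 1), (w.choose u : R) * (s.choose (K - u) : R) := by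
  rw [Nat.add_choose_eq, Finset.Nat.sum_antidiagonal_eq_sum_range_succ_mk, Nat.cast_sum]
  push_cast
  refine (sum_subset (range_subset_range.2 (by omega)) fun u _ hu => ?_).symm
  rw [Nat.choose_eq_zero_of_lt (by simpa using hu), Nat.cast_zero, zero_mul]

theorem det_toeplitz_choose (s a n : ℕ) (hn : n ≤ a + 1) :
    (toeplitz (fun m => (s.choose m : R)) n a).det =
      (of fun i j : Fin n => ((s + (n - 1 - i)).choose (a + j - i) : R)).det := by
  let L : Matrix (Fin n) (Fin n) R :=
    of fun i t => if i ≤ t then ((n - 1 - i).choose (t - i) : R) else 0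
  have hL : L.det = 1 := by
    rw [det_of_isUpperTriangular (M := L) fun i t (h : t < i) => if_neg (not_le.2 h)]
    exact prod_eq_one fun i _ => by simp [L]
  suffices L * toeplitz (fun m => (s.choose m : R)) n a =
      of fun i j : Fin n => ((s + (n - 1 - i)).choose (a + j - i) : R) by
    rw [← this, det_mul, hL, one_mul]
  ext i j
  have hsummand : ∀ t : Fin n, L i t * toeplitz (fun m => (s.choose m : R)) n a t j =
      if (i : ℕ) ≤ t then ((n - 1 - i).choose (t - i) : R) * s.choose (a + j - t) else 0 := by
    intro t
    simp only [L, toeplitz, of_apply, Fin.le_def, ite_mul, zero_mul]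
  have hfilter : (range n).filter (fun t => (i : ℕ) ≤ t) = Ico (i : ℕ) n := by
    ext t; simp only [mem_filter, mem_range, mem_Ico]; omega
  rw [mul_apply, sum_congr rfl fun t _ => hsummand t, Fin.sum_univ_eq_sum_range
    (fun t => if (i : ℕ) ≤ t then ((n - 1 - i).choose (t - i) : R) * s.choose (a + j - t) else 0),
    ← sum_filter, hfilter, sum_Ico_eq_sum_range, of_apply, add_comm s,
    choose_add_eq_sum_range _ _ _ (by omega), show n - i = n - 1 - i + 1 by omega]
  refine sum_congr rfl fun u _ => ?_
  rw [Nat.add_sub_cancel_left, Nat.sub_add_eq]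

theorem det_of_descFactorial (a n : ℕ) :
    (of fun i j : Fin n => ((a + j).descFactorial i : R)).det =
      (vandermonde fun j : Fin n => (j : R)).det := by
  have hℤ : (of fun i j : Fin n => ((a + j).descFactorial i : ℤ)).det =
      (vandermonde fun j : Fin n => (j : ℤ)).det := by
    rw [← det_vandermonde_add _ (a : ℤ), det_eval_matrixOfPolynomials_eq_det_vandermonde _
      (fun i => descPochhammer ℤ i) (fun i => descPochhammer_natDegree ℤ i)
      (fun i => monic_descPochhammer ℤ i), ← det_transpose]
    congr 1
    ext i j
    simp only [transpose_apply, of_apply]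
    rw [show ((i : ℕ) : ℤ) + a = ((a + i : ℕ) : ℤ) by push_cast; ring,
      descPochhammer_eval_eq_descFactorial]
  have hR := congrArg (Int.castRingHom R) hℤ
  rw [RingHom.map_det, RingHom.map_det] at hR
  convert hR using 2 <;> ext i j <;> simp

theorem choose_sub_mul_factorial_mul_factorial (N m i : ℕ) (hi : i ≤ m) (hm : m ≤ N + i) :
    N.choose (m - i) * (m ! * (N + i - m)!) = N ! * m.descFactorial i := by
  have h := Nat.choose_mul_factorial_mul_factorial (show m - i ≤ N by omega)
  rw [show N - (m - i) = N + i - m by omega] at h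
  rw [← Nat.factorial_mul_descFactorial hi, ← h]
  ring

theorem det_toeplitz_choose_mul_prod (s a n : ℕ) (hn : n ≤ a + 1) (has : a ≤ s) :
    (toeplitz (fun m => (s.choose m : R)) n a).det *
        ∏ j : Fin n, (((a + j)! * (s + n - 1 - (a + j))! : ℕ) : R) =
      (∏ i : Fin n, ((s + (n - 1 - i))! : R)) * (vandermonde fun j : Fin n => (j : R)).det := by
  rw [det_toeplitz_choose s a n hn, mul_comm, ← det_mul_row, ← det_of_descFactorial a,
    ← det_mul_column]
  congr 1
  ext i j
  have key :=
    choose_sub_mul_factorial_mul_factorial (s + (n - 1 - i)) (a + j) i (by omega) (by omega)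
  rw [show s + (n - 1 - i) + i = s + n - 1 by omega] at key
  simp only [of_apply]
  rw [mul_comm]
  exact_mod_cast congrArg (Nat.cast : ℕ → R) key

theorem natCast_ne_zero_of_dvd {S : Type*} [Semiring S] {m N : ℕ} (h : m ∣ N)
    (hN : (N : S) ≠ 0) : (m : S) ≠ 0 :=
  ne_zero_of_dvd_ne_zero hN (Nat.cast_dvd_cast h)

theorem det_toeplitz_choose_ne_zero {F : Type*} [Field F] (s a n : ℕ) (hn : n ≤ a + 1)
    (has : a ≤ s) (hfac : ((s + n - 1)! : F) ≠ 0) :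
    (toeplitz (fun m => (s.choose m : F)) n a).det ≠ 0 := by
  have hsmall : ∀ m ≤ s + n - 1, (m ! : F) ≠ 0 := fun m hm =>
    natCast_ne_zero_of_dvd (Nat.factorial_dvd_factorial hm) hfac
  have hlt : ∀ i j : Fin n, i < j → ((i : ℕ) : F) ≠ (j : ℕ) := fun i j hij heq =>
    natCast_ne_zero_of_dvd (Nat.dvd_factorial (Nat.sub_pos_of_lt hij) le_rfl)
      (hsmall (j - i) (by omega)) (by rw [Nat.cast_sub hij.le, heq, sub_self])
  have hvdm : (vandermonde fun j : Fin n => (j : F)).det ≠ 0 :=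
    det_vandermonde_ne_zero_iff.2 fun i j hij => by
      by_contra hne
      rcases lt_or_gt_of_ne hne with h | h
      exacts [hlt i j h hij, hlt j i h hij.symm]
  have hprod : (toeplitz (fun m => (s.choose m : F)) n a).det *
      ∏ j : Fin n, (((a + j)! * (s + n - 1 - (a + j))! : ℕ) : F) ≠ 0 := by
    rw [det_toeplitz_choose_mul_prod s a n hn has]
    exact mul_ne_zero (prod_ne_zero_iff.2 fun i _ => hsmall _ (by omega)) hvdm
  exact left_ne_zero_of_mul hprod

theorem det_toeplitz_neg_one_pow_mul (g : ℕ → R) (n a : ℕ) (hn : n ≤ a + 1) :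
    (toeplitz (fun m => (-1) ^ m * g m) n a).det = (-1) ^ (n * a) * (toeplitz g n a).det := by
  have hsign : ∀ i j : Fin n, ((-1 : R) ^ (a + j - i)) = (-1) ^ (a + i) * (-1) ^ (j : ℕ) := by
    intro i j
    rw [← pow_add, show a + (i : ℕ) + j = (a + j - i) + 2 * i by omega, pow_add, pow_mul,
      neg_one_sq, one_pow, mul_one]
  have hrows : toeplitz (fun m => (-1) ^ m * g m) n a = of fun (i j : Fin n) =>
      (-1) ^ (a + (i : ℕ)) * (of fun (i j : Fin n) => (-1) ^ (j : ℕ) * toeplitz g n a i j) i j := by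
    ext i j
    simp only [toeplitz, of_apply, hsign, mul_assoc]
  rw [hrows, det_mul_column, det_mul_row, ← mul_assoc, ← prod_mul_distrib]
  congr 1
  rw [mul_comm n, pow_mul, ← Fin.prod_const]
  refine prod_congr rfl fun i _ => ?_
  rw [← pow_add, show a + (i : ℕ) + i = a + 2 * i by ring, pow_add, pow_mul, neg_one_sq, one_pow,
    mul_one]

def finEvenOddEquiv (m n : ℕ) (hnm : n ≤ m) (hmn : m ≤ n + 1) : Fin m ⊕ Fin n ≃ Fin (m + n) where
  toFun := Sum.elim (fun i => ⟨2 * i, by omega⟩) (fun j => ⟨2 * j + 1, by omega⟩)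
  invFun x := if h : (x : ℕ) % 2 = 0 then .inl ⟨x / 2, by omega⟩ else .inr ⟨x / 2, by omega⟩
  left_inv := by
    rintro (i | j)
    · simp
    · simp [Fin.ext_iff]
      omega
  right_inv x := by
    by_cases hx : (x : ℕ) % 2 = 0 <;> simp [hx, Fin.ext_iff] <;> omega

section ParitySplit

variable (f : ℕ → R) (hf : ∀ t, f (2 * t + 1) = 0)
include hf

theorem det_toeplitz_two_mul (m n a : ℕ) (hnm : n ≤ m) (hmn : m ≤ n + 1) (hna : n ≤ a) :
    (toeplitz f (m + n) (2 * a)).det =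
      (toeplitz (fun t => f (2 * t)) m a).det * (toeplitz (fun t => f (2 * t)) n a).det := by
  rw [← det_submatrix_equiv_self (finEvenOddEquiv m n hnm hmn), ← det_fromBlocks_zero₂₁ _ 0]
  congr 1
  ext (i | i) (j | j) <;>
    simp only [submatrix_apply, toeplitz, of_apply, finEvenOddEquiv, Equiv.coe_fn_mk,
      Sum.elim_inl, Sum.elim_inr, fromBlocks_apply₁₁, fromBlocks_apply₁₂, fromBlocks_apply₂₁,
      fromBlocks_apply₂₂, Matrix.zero_apply]
  · congr 1; omega
  · rw [show 2 * a + (2 * (j : ℕ) + 1) - 2 * i = 2 * (a + j - i) + 1 by omega, hf]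
  · rw [show 2 * a + 2 * (j : ℕ) - (2 * i + 1) = 2 * (a + j - i - 1) + 1 by omega, hf]
  · congr 1; omega

theorem exists_det_toeplitz_two_mul_add_one (m a : ℕ) (hma : m ≤ a + 1) :
    ∃ ε : ℤˣ, (toeplitz f (m + m) (2 * a + 1)).det =
      ε • ((toeplitz (fun t => f (2 * t)) m a).det *
        (toeplitz (fun t => f (2 * t)) m (a + 1)).det) := by
  set e := finEvenOddEquiv m m le_rfl (Nat.le_succ m)
  set swap : Equiv.Perm (Fin m ⊕ Fin m) := Equiv.sumComm _ _
  have hblocks : ((toeplitz f (m + m) (2 * a + 1)).submatrix e e).submatrix swap id =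
      fromBlocks (toeplitz (fun t => f (2 * t)) m a) 0 0
        (toeplitz (fun t => f (2 * t)) m (a + 1)) := by
    ext (i | i) (j | j) <;>
      simp only [swap, e, submatrix_apply, id, Equiv.sumComm_apply, Sum.swap_inl, Sum.swap_inr,
        toeplitz, of_apply, finEvenOddEquiv, Equiv.coe_fn_mk, Sum.elim_inl, Sum.elim_inr,
        fromBlocks_apply₁₁, fromBlocks_apply₁₂, fromBlocks_apply₂₁, fromBlocks_apply₂₂,
        Matrix.zero_apply]
    · congr 1; omega
    · rw [show 2 * a + 1 + (2 * (j : ℕ) + 1) - (2 * i + 1) = 2 * (a + j - i) + 1 by omega, hf]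
    · rw [show 2 * a + 1 + 2 * (j : ℕ) - 2 * i = 2 * (a + j - i) + 1 by omega, hf]
    · congr 1; omega
  have h := det_permute swap ((toeplitz f (m + m) (2 * a + 1)).submatrix e e)
  rw [hblocks, det_fromBlocks_zero₂₁, det_submatrix_equiv_self] at h
  refine ⟨Equiv.Perm.sign swap, ?_⟩
  rw [Units.smul_def, zsmul_eq_mul, h, ← mul_assoc, ← Int.cast_mul, ← Units.val_mul,
    Int.units_mul_self, Units.val_one, Int.cast_one, one_mul]

end ParitySplit

theorem det_toeplitz_ne_zero_of_signed_choose {F : Type*} [Field F] (f : ℕ → F) (σ k c : ℕ)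
    (hodd : ∀ t, f (2 * t + 1) = 0)
    (heven : ∀ t ≤ (c + k) / 2, f (2 * t) = (-1) ^ t * σ.choose t)
    (hkc : Odd (k + c)) (hk : k ≤ c + 1) (hc : (c + 1) / 2 ≤ σ)
    (hfac : ((σ + (k + 1) / 2 - 1)! : F) ≠ 0) :
    (toeplitz f k c).det ≠ 0 := by
  have hblock : ∀ n a, n ≤ a + 1 → a ≤ σ → a + n ≤ (c + k) / 2 + 1 → n ≤ (k + 1) / 2 →
      (toeplitz (fun t => f (2 * t)) n a).det ≠ 0 := by
    intro n a hna haσ hbound hnk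
    rw [toeplitz_congr (g := fun t => (-1) ^ t * (σ.choose t : F)) fun t ht => heven t (by omega),
      det_toeplitz_neg_one_pow_mul _ n a hna]
    exact mul_ne_zero (pow_ne_zero _ (neg_ne_zero.2 one_ne_zero))
      (det_toeplitz_choose_ne_zero σ a n hna haσ
        (natCast_ne_zero_of_dvd (Nat.factorial_dvd_factorial (by omega)) hfac))
  obtain ⟨m, rfl | rfl⟩ := Nat.even_or_odd' k
  · obtain ⟨a, rfl⟩ : ∃ a, c = 2 * a + 1 := ⟨c / 2, by obtain ⟨x, hx⟩ := hkc; omega⟩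
    obtain ⟨ε, hε⟩ := exists_det_toeplitz_two_mul_add_one f hodd m a (by omega)
    rw [two_mul m, hε]
    exact (smul_ne_zero_iff_ne ε).2 (mul_ne_zero (hblock _ _ (by omega) (by omega) (by omega)
      (by omega)) (hblock _ _ (by omega) (by omega) (by omega) (by omega)))
  · obtain ⟨a, rfl⟩ : ∃ a, c = 2 * a := ⟨c / 2, by obtain ⟨x, hx⟩ := hkc; omega⟩
    rw [show 2 * m + 1 = (m + 1) + m by ring,
      det_toeplitz_two_mul f hodd (m + 1) m a (by omega) (by omega) (by omega)]
    exact mul_ne_zero (hblock _ _ (by omega) (by omega) (by omega) (by omega))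
      (hblock _ _ (by omega) (by omega) (by omega) (by omega))

section RatCast

variable (K : Type*) [Field K]

-- For `K = ZMod p`: the `p`-integral rationals, on which `Rat.cast` is reduction mod `p`.
def ratCastDomain : Subring ℚ where
  carrier := {q | (q.den : K) ≠ 0}
  mul_mem' {q r} hq hr := natCast_ne_zero_of_dvd (Rat.mul_den_dvd q r) (by
    push_cast; exact mul_ne_zero hq hr)
  one_mem' := by simp
  add_mem' {q r} hq hr := natCast_ne_zero_of_dvd (Rat.add_den_dvd q r) (by
    push_cast; exact mul_ne_zero hq hr)
  zero_mem' := by simp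
  neg_mem' {q} hq := by simpa [Rat.den_neg_eq_den] using hq

def ratCastHom : ratCastDomain K →+* K where
  toFun q := ((q : ℚ) : K)
  map_one' := Rat.cast_one
  map_mul' q r := Rat.cast_mul_of_ne_zero q.2 r.2
  map_zero' := Rat.cast_zero
  map_add' q r := Rat.cast_add_of_ne_zero q.2 r.2

variable {K}

theorem intCast_div_natCast_mem_ratCastDomain (z : ℤ) {d : ℕ} (hd : (d : K) ≠ 0) :
    (z / d : ℚ) ∈ ratCastDomain K := by
  rw [div_eq_mul_inv]
  refine Subring.mul_mem _ (intCast_mem _ z) ?_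
  change (((d : ℚ)⁻¹.den : ℕ) : K) ≠ 0
  rw [Rat.inv_natCast_den]
  split_ifs <;> simp_all

theorem ratCast_det {ι : Type*} [Fintype ι] [DecidableEq ι] (A : Matrix ι ι ℚ)
    (hA : ∀ i j, A i j ∈ ratCastDomain K) : ((A.det : ℚ) : K) = (A.map (↑)).det := by
  let B : Matrix ι ι (ratCastDomain K) := of fun i j => ⟨A i j, hA i j⟩
  have hAB : A = (ratCastDomain K).subtype.mapMatrix B := rfl
  rw [hAB, ← RingHom.map_det]
  exact RingHom.map_det (ratCastHom K) B

end RatCast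

theorem intCast_prod_odd_sub {K : Type*} [Field K] (r σ t : ℕ) (hσ : (2 * σ + 1 : K) = 2 * r) :
    ((∏ j ∈ range t, (2 * j + 1 - 2 * r : ℤ) : ℤ) : K) = (-2) ^ t * t ! * σ.choose t := by
  rw [mul_assoc, ← Nat.cast_mul, ← Nat.descFactorial_eq_factorial_mul_choose,
    ← descPochhammer_eval_eq_descFactorial, descPochhammer_eval_eq_prod_range,
    show (-2 : K) ^ t = ∏ _j ∈ range t, (-2 : K) by simp, ← prod_mul_distrib]
  push_cast
  refine prod_congr rfl fun j _ => ?_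
  linear_combination hσ

section Coefficients

variable {c : ℕ → ℚ} {r : ℕ}
  (hrec : ∀ n : ℕ, ((n : ℚ) + 2) * c (n + 2) = ((n : ℚ) + 1 - 2 * r) * c n)
include hrec

theorem coeff_two_mul_add_one (h1 : c 1 = 0) (t : ℕ) : c (2 * t + 1) = 0 := by
  induction t with
  | zero => simpa using h1
  | succ t ih =>
    have h := hrec (2 * t + 1)
    rw [ih, mul_zero] at h
    exact (mul_eq_zero.1 h).resolve_left (by positivity)

theorem coeff_two_mul (h0 : c 0 = 1) (t : ℕ) :
    c (2 * t) = ((∏ j ∈ range t, (2 * j + 1 - 2 * r : ℤ) : ℤ) : ℚ) / ((2 ^ t * t ! : ℕ) : ℚ) := by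
  rw [eq_div_iff (by positivity)]
  induction t with
  | zero => simp [h0]
  | succ t ih =>
    have h := hrec (2 * t)
    rw [prod_range_succ, show 2 * (t + 1) = 2 * t + 2 by ring]
    push_cast [Nat.factorial_succ] at h ih ⊢
    linear_combination (2 ^ t * (t ! : ℚ)) * h + (2 * (t : ℚ) + 1 - 2 * r) * ih

theorem coeff_two_mul_mem_ratCastDomain {K : Type*} [Field K] (h0 : c 0 = 1) {t : ℕ}
    (ht : ((2 ^ t * t ! : ℕ) : K) ≠ 0) : c (2 * t) ∈ ratCastDomain K := by
  rw [coeff_two_mul hrec h0]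
  exact intCast_div_natCast_mem_ratCastDomain _ ht

theorem ratCast_coeff_two_mul {K : Type*} [Field K] (h0 : c 0 = 1) {σ : ℕ}
    (hσ : (2 * σ + 1 : K) = 2 * r) {t : ℕ} (ht : ((2 ^ t * t ! : ℕ) : K) ≠ 0) :
    (c (2 * t) : K) = (-1) ^ t * σ.choose t := by
  rw [coeff_two_mul hrec h0, Rat.cast_div_of_ne_zero (by rw [Rat.den_intCast]; simp)
    (by rwa [Rat.num_natCast, Int.cast_natCast]), Rat.cast_intCast, intCast_prod_odd_sub r σ t hσ,
    Rat.cast_natCast, div_eq_iff ht, show (-2 : K) = -1 * 2 by ring, mul_pow]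
  push_cast
  ring

end Coefficients

theorem two_pow_mul_factorial_ne_zero {p : ℕ} [hp : Fact p.Prime] (hp2 : p ≠ 2) {t : ℕ}
    (ht : t < p) : ((2 ^ t * t ! : ℕ) : ZMod p) ≠ 0 := by
  rw [Ne, ZMod.natCast_eq_zero_iff, hp.out.dvd_mul, hp.out.dvd_factorial, not_or, not_le]
  exact ⟨fun h => hp2 ((Nat.prime_dvd_prime_iff_eq hp.out Nat.prime_two).1
    (hp.out.dvd_of_dvd_pow h)), ht⟩

theorem stmt_4_general (r : ℕ) (hr : 1 ≤ r) (β : ℚ) (c : ℕ → ℚ)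
    (h0 : c 0 = 1) (h1 : c 1 = 0)
    (hrec : ∀ n : ℕ,
      ((n : ℚ) + 2) * c (n + 2) = (β / 4) * ((n : ℚ) + 1 - 2 * r) * c n)
    (hβ : β = 4)
    (k : ℕ)
    (p : ℕ) [Fact p.Prime] (hodd : Odd p) (hp : k + 2 * r - 2 < p) :
    ((Matrix.det (Matrix.of fun i j : Fin k =>
        c (k + 2 * r - 1 + j.val - i.val)) : ℚ) : ZMod p) ≠ 0 := by
  obtain ⟨h, rfl⟩ := hodd
  have hrec' : ∀ n : ℕ, ((n : ℚ) + 2) * c (n + 2) = ((n : ℚ) + 1 - 2 * r) * c n := fun n => by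
    rw [hrec, hβ]; ring
  have hσ : (2 * (r + h : ℕ) + 1 : ZMod (2 * h + 1)) = 2 * r := by
    have := ZMod.natCast_self (2 * h + 1)
    push_cast at this ⊢
    linear_combination this
  have hden : ∀ t < 2 * h + 1, ((2 ^ t * t ! : ℕ) : ZMod (2 * h + 1)) ≠ 0 := fun t ht =>
    two_pow_mul_factorial_ne_zero (by omega) ht
  rw [ratCast_det]
  · refine det_toeplitz_ne_zero_of_signed_choose (fun m => (c m : ZMod (2 * h + 1))) (r + h) k _
      (fun t => by simp [coeff_two_mul_add_one hrec' h1 t])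
      (fun t ht => ratCast_coeff_two_mul hrec' h0 hσ (hden t (by omega)))
      ⟨k + r - 1, by omega⟩ (by omega) (by omega) ?_
    rw [Ne, ZMod.natCast_eq_zero_iff, (Fact.out : (2 * h + 1).Prime).dvd_factorial]
    omega
  · intro i j
    obtain ⟨t, ht | ht⟩ := Nat.even_or_odd' (k + 2 * r - 1 + j - i)
    · simp only [of_apply, ht]
      exact coeff_two_mul_mem_ratCastDomain hrec' h0 (hden t (by omega))
    · simp only [of_apply, ht, coeff_two_mul_add_one hrec' h1]
      exact zero_mem _

/-- Fix a positive integer `r` and a rational `β`. Define `c̃ : ℕ → ℚ` by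
`c̃ 0 = 1`, `c̃ 1 = 0` and `(n+2)·c̃ (n+2) = (β/4)·(n+1−2r)·c̃ n` for all `n ≥ 0`.
Let `k ≥ 1` and suppose `β = 4`. Define `P_k(0,4,0)` as the determinant of the
`k×k` matrix with `(i,j)` entry (1-based) `c̃ (k+2r−1+j−i)`. Then for every odd
prime `p > k+2r−2`, the image of `P_k(0,4,0)` in `𝔽_p` is nonzero. -/
theorem stmt_4 (r : ℕ) (hr : 1 ≤ r) (β : ℚ) (c : ℕ → ℚ)
    (h0 : c 0 = 1) (h1 : c 1 = 0)
    (hrec : ∀ n : ℕ,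
      ((n : ℚ) + 2) * c (n + 2) = (β / 4) * ((n : ℚ) + 1 - 2 * r) * c n)
    (hβ : β = 4)
    (k : ℕ) (hk : 1 ≤ k)
    (p : ℕ) [Fact p.Prime] (hodd : Odd p) (hp : k + 2 * r - 2 < p) :
    ((Matrix.det (Matrix.of fun i j : Fin k =>
        c (k + 2 * r - 1 + j.val - i.val)) : ℚ) : ZMod p) ≠ 0 :=
  stmt_4_general r hr β c h0 h1 hrec hβ k p hodd hp
end

section
/- Let n ≥ 1 be an integer, and for 1 ≤ k ≤ n let α_k ∈ ℚ^n be the row vector whose j-th coordinate, for 1 ≤ j ≤ n, is binomial(k−1, j−1). Set B̃_n := (n+1)·I_n − B_n. Then for every k with 1 ≤ k ≤ n−1 one has α_k · B̃_n = (n−k)·α_{k+1}, and moreover α_n · B̃_n = 0. -/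
/-!
`B̃_n = (n+1)·I_n − B_n` is tridiagonal, so the `j`-th entry of `α·B̃_n` only involves the
three binomials `C(a, j-1)`, `C(a, j)`, `C(a, j+1)` (with `a = k - 1`). The absorption identity
`(j+1)·C(a, j+1) = (a-j)·C(a, j)` and Pascal's rule collapse this combination to
`(n-1-a)·C(a+1, j)`; at the last column the missing subdiagonal entry does no harm because
`C(a, n) = 0` for `a < n`.
-/

open Finset Matrix

/-- The `n×n` matrix `B_n` over `ℚ` with (1-based) diagonal entries `2i`,
subdiagonal entries `i−1` and superdiagonal entries `−(n−i)`. -/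
def Bn (n : ℕ) : Matrix (Fin n) (Fin n) ℚ :=
  Matrix.of fun i j =>
    if i = j then 2 * ((i.val : ℚ) + 1)
    else if j.val + 1 = i.val then (i.val : ℚ)
    else if i.val + 1 = j.val then -((n : ℚ) - ((i.val : ℚ) + 1))
    else 0

theorem Nat.cast_choose_succ_mul {R : Type*} [CommRing R] (a j : ℕ) :
    (a.choose (j + 1) : R) * (j + 1) = a.choose j * (a - j) := by
  rcases le_or_gt j a with h | h
  · have := congrArg (Nat.cast : ℕ → R) (Nat.choose_succ_right_eq a j)
    push_cast [Nat.cast_sub h] at this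
    exact this
  · simp [Nat.choose_eq_zero_of_lt h, Nat.choose_eq_zero_of_lt (Nat.lt_succ_of_lt h)]

theorem Fin.sum_univ_ite_val_eq {M : Type*} [AddCommMonoid M] {n : ℕ} (m : ℕ) (f : Fin n → M) :
    ∑ i : Fin n, (if i.val = m then f i else 0) = if h : m < n then f ⟨m, h⟩ else 0 := by
  split_ifs with h
  · rw [Fintype.sum_eq_single ⟨m, h⟩ fun i hi => if_neg fun h' => hi (Fin.ext h')]
    simp
  · exact sum_eq_zero fun i _ => if_neg (by omega)

theorem smul_one_sub_Bn_apply (n : ℕ) (i j : Fin n) :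
    (((n : ℚ) + 1) • (1 : Matrix (Fin n) (Fin n) ℚ) - Bn n) i j =
      (if i.val + 1 = j.val then (n : ℚ) - j else 0) +
      (if i.val = j.val then (n : ℚ) - 1 - 2 * j else 0) +
      (if i.val = j.val + 1 then -((j : ℚ) + 1) else 0) := by
  obtain ⟨i, hi⟩ := i
  obtain ⟨j, hj⟩ := j
  simp only [Matrix.sub_apply, Matrix.smul_apply, one_apply, Bn, of_apply, Fin.ext_iff, smul_eq_mul]
  split_ifs <;> subst_vars <;> first | omega | (push_cast; ring)

theorem vecMul_smul_one_sub_Bn_apply (n : ℕ) (v : ℕ → ℚ) (j : Fin n) :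
    vecMul (fun i : Fin n => v i) (((n : ℚ) + 1) • (1 : Matrix (Fin n) (Fin n) ℚ) - Bn n) j =
      (if j.val = 0 then 0 else v (j - 1) * (n - j)) + v j * (n - 1 - 2 * j) +
      (if j.val + 1 < n then -(v (j + 1) * (j + 1)) else 0) := by
  conv_lhs => simp only [vecMul, dotProduct, smul_one_sub_Bn_apply, mul_add, mul_ite, mul_zero,
    sum_add_distrib]
  obtain ⟨_ | m, hj⟩ := j
  · simp [Fin.sum_univ_ite_val_eq, hj.ne']
  · simp only [Nat.add_right_cancel_iff, Fin.sum_univ_ite_val_eq, hj, (Nat.lt_succ_self m).trans hj,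
      dite_true, add_eq_zero, one_ne_zero, and_false, if_false, Nat.add_sub_cancel, Nat.cast_add,
      Nat.cast_one]
    split_ifs <;> ring

theorem vecMul_choose_smul_one_sub_Bn {n a : ℕ} (ha : a < n) :
    vecMul (fun j : Fin n => (a.choose j : ℚ))
        (((n : ℚ) + 1) • (1 : Matrix (Fin n) (Fin n) ℚ) - Bn n) =
      ((n : ℚ) - 1 - a) • fun j : Fin n => ((a + 1).choose j : ℚ) := by
  ext ⟨j, hj⟩
  rw [vecMul_smul_one_sub_Bn_apply n (fun i => (a.choose i : ℚ))]
  simp only [Pi.smul_apply, smul_eq_mul]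
  have h_last : (if j + 1 < n then -((a.choose (j + 1) : ℚ) * (j + 1)) else 0) =
      -((a.choose (j + 1) : ℚ) * (j + 1)) := by
    split_ifs with h
    · rfl
    · simp [Nat.choose_eq_zero_of_lt (show a < j + 1 by omega)]
  rw [h_last]
  rcases j with _ | m
  · simp only [if_true, zero_add, Nat.choose_zero_right, Nat.choose_one_right, Nat.cast_one,
      Nat.cast_zero]
    ring
  · have h₁ := Nat.cast_choose_succ_mul (R := ℚ) a m
    have h₂ := Nat.cast_choose_succ_mul (R := ℚ) a (m + 1)
    simp only [Nat.add_sub_cancel, Nat.choose_succ_succ, add_eq_zero, one_ne_zero, and_false, if_false]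
    push_cast at h₁ h₂ ⊢
    linear_combination -h₁ - h₂

theorem stmt_19_general (n : ℕ) :
    (∀ k : ℕ, 1 ≤ k → k ≤ n - 1 →
      Matrix.vecMul (fun j : Fin n => (Nat.choose (k - 1) j.val : ℚ))
          (((n : ℚ) + 1) • (1 : Matrix (Fin n) (Fin n) ℚ) - Bn n) =
        ((n : ℚ) - k) • fun j : Fin n => (Nat.choose k j.val : ℚ)) ∧
    Matrix.vecMul (fun j : Fin n => (Nat.choose (n - 1) j.val : ℚ))
        (((n : ℚ) + 1) • (1 : Matrix (Fin n) (Fin n) ℚ) - Bn n) = 0 := by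
  refine ⟨fun k hk₁ hk₂ => ?_, ?_⟩
  · obtain ⟨a, rfl⟩ : ∃ a, k = a + 1 := ⟨k - 1, by omega⟩
    rw [Nat.add_sub_cancel, vecMul_choose_smul_one_sub_Bn (by omega)]
    push_cast
    ring_nf
  · rcases n with _ | m
    · exact Subsingleton.elim _ _
    · rw [Nat.add_sub_cancel, vecMul_choose_smul_one_sub_Bn (Nat.lt_succ_self m)]
      push_cast
      simp

/-- Let `n ≥ 1` and, for `1 ≤ k ≤ n`, let `α_k ∈ ℚ^n` be the row vector with
`j`-th coordinate (1-based) `C(k−1, j−1)`. Set `B̃_n := (n+1)·I_n − B_n`. Then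
`α_k · B̃_n = (n−k)·α_{k+1}` for `1 ≤ k ≤ n−1`, and `α_n · B̃_n = 0`. -/
theorem stmt_19 (n : ℕ) (hn : 1 ≤ n) :
    (∀ k : ℕ, 1 ≤ k → k ≤ n - 1 →
      Matrix.vecMul (fun j : Fin n => (Nat.choose (k - 1) j.val : ℚ))
          (((n : ℚ) + 1) • (1 : Matrix (Fin n) (Fin n) ℚ) - Bn n) =
        ((n : ℚ) - k) • fun j : Fin n => (Nat.choose k j.val : ℚ)) ∧
    Matrix.vecMul (fun j : Fin n => (Nat.choose (n - 1) j.val : ℚ))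
        (((n : ℚ) + 1) • (1 : Matrix (Fin n) (Fin n) ℚ) - Bn n) = 0 :=
  stmt_19_general n
end
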